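/- Let D be a PID with prime element π such that D/(π) is a finite field with q elements, and let F(X) = (X^q − X)/π ∈ Int(D). Suppose A is a commutative D-algebra equipped with a map ∘ : Int(D) × A → A satisfying: f ∘ a = f(a) for f ∈ D[X]; (f·g) ∘ a = (f ∘ a)(g ∘ a) and (f+g) ∘ a = (f ∘ a)+(g ∘ a); F ∘ (a+b) = F ∘ a + F ∘ b + h(a,b) where h(X,Y) = F(X+Y) − F(X) − F(Y) ∈ D[X,Y]; and (f ∘ g) ∘ a = f ∘ (g ∘ a) for all f,g ∈ Int(D) where f ∘ g denotes polynomial composition. Then A has no π-torsion: if πa = 0 for a ∈ A then a = 0. -/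

import Mathlib

set_option linter.unusedSectionVars false
open Polynomial TensorProduct

variable (D K : Type*) [CommRing D] [IsDomain D] [Field K] [Algebra D K] [IsFractionRing D K]

/-- The ring of integer-valued polynomials `Int(D) ⊆ K[X]`. -/
noncomputable def IntD : Subalgebra D (Polynomial K) :=
  ⨅ a : D, Subalgebra.comap ((Polynomial.aeval (algebraMap D K a)).restrictScalars D)
    (Algebra.ofId D K).range

theorem mem_IntD {f : Polynomial K} :
    f ∈ IntD D K ↔
      ∀ a : D, ∃ d : D, algebraMap D K d = Polynomial.eval (algebraMap D K a) f := by
  simp [IntD, Algebra.mem_iInf, Subalgebra.mem_comap, Algebra.ofId_apply, Algebra.mem_bot,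
    Set.mem_range]

/-- `X` as an element of `Int(D)`. -/
noncomputable def Xint : IntD D K := ⟨Polynomial.X, (mem_IntD D K).mpr fun a => ⟨a, by simp⟩⟩

/-!
Since `π F = X^q - X`, the composite `F(πX) = π^(q-1) X^q - X` has coefficients in `D`. If
`π a = 0`, the composition axiom gives `π^(q-1) a^q - a = F ∘ (π a) = F ∘ 0`, and `F ∘ 0` is
the constant `F(0) = 0`, again by the composition axiom. As `q ≥ 2`,
`π^(q-1) a^q = (π a)^(q-1) a = 0`, so `a = 0`.
-/

lemma map_mem_IntD (g : D[X]) : g.map (algebraMap D K) ∈ IntD D K :=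
  (mem_IntD D K).mpr fun a => ⟨g.eval a, by rw [eval_map, eval₂_at_apply]⟩

lemma two_le_card_quotient_span_singleton {R : Type*} [CommRing R] {p : R} (hp : Prime p)
    [Finite (R ⧸ Ideal.span {p})] : 2 ≤ Nat.card (R ⧸ Ideal.span {p}) := by
  have : Nontrivial (R ⧸ Ideal.span {p}) :=
    Ideal.Quotient.nontrivial_iff.mpr (by simpa [Ideal.span_singleton_eq_top] using hp.not_isUnit)
  exact Finite.one_lt_card_iff_nontrivial.mpr this

section XPowSubX

variable {R : Type*} [CommRing R] [IsDomain R] {c : R} {F : R[X]} {q : ℕ}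

lemma eval_zero_eq_zero_of_C_mul_eq_X_pow_sub_X (hF : C c * F = X ^ q - X) (hc : c ≠ 0)
    (hq : q ≠ 0) : F.eval 0 = 0 := by
  simpa [zero_pow hq, hc] using congrArg (eval 0) hF

lemma comp_C_mul_X_eq_of_C_mul_eq_X_pow_sub_X (hF : C c * F = X ^ q - X) (hc : c ≠ 0)
    (hq : q ≠ 0) : F.comp (C c * X) = C (c ^ (q - 1)) * X ^ q - X := by
  apply mul_left_cancel₀ (C_ne_zero.mpr hc)
  calc C c * F.comp (C c * X) = (C c * F).comp (C c * X) := by rw [mul_comp, C_comp]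
    _ = C (c ^ q) * X ^ q - C c * X := by rw [hF, sub_comp, X_pow_comp, X_comp, mul_pow, C_pow]
    _ = C c * (C (c ^ (q - 1)) * X ^ q - X) := by
      rw [← Nat.sub_one_add_one hq, pow_succ', C_mul, Nat.add_sub_cancel]; ring

end XPowSubX

lemma op_aeval_of_comp_eq_map {A : Type*} [CommRing A] [Algebra D A] (op : IntD D K → A → A)
    (heval : ∀ (g : D[X]) (hg : g.map (algebraMap D K) ∈ IntD D K) (a : A),
      op ⟨g.map (algebraMap D K), hg⟩ a = aeval a g)
    (hcomp : ∀ (f g : IntD D K) (hfg : (f : K[X]).comp (g : K[X]) ∈ IntD D K) (a : A),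
      op ⟨(f : K[X]).comp (g : K[X]), hfg⟩ a = op f (op g a))
    (f : IntD D K) {g G : D[X]} (hfg : (f : K[X]).comp (g.map (algebraMap D K)) =
      G.map (algebraMap D K)) (a : A) :
    op f (aeval a g) = aeval a G := by
  rw [← heval g (map_mem_IntD D K g), ← hcomp _ _ (hfg ▸ map_mem_IntD D K G),
    ← heval G (map_mem_IntD D K G)]
  exact congrArg (op · a) (Subtype.ext hfg)

theorem stmt_13 (π : D) (hπ : Prime π) (q : ℕ)
    [Finite (D ⧸ Ideal.span {π})] (hq : Nat.card (D ⧸ Ideal.span {π}) = q)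
    (F : Polynomial K) (hFInt : F ∈ IntD D K)
    (hF : Polynomial.C (algebraMap D K π) * F = Polynomial.X ^ q - Polynomial.X)
    (A : Type*) [CommRing A] [Algebra D A]
    (op : IntD D K → A → A)
    (heval : ∀ (g : Polynomial D) (hg : Polynomial.map (algebraMap D K) g ∈ IntD D K) (a : A),
      op ⟨Polynomial.map (algebraMap D K) g, hg⟩ a = Polynomial.aeval a g)
    (hcomp : ∀ (f g : IntD D K) (hfg : (f : Polynomial K).comp (g : Polynomial K) ∈ IntD D K)
      (a : A), op ⟨(f : Polynomial K).comp (g : Polynomial K), hfg⟩ a = op f (op g a)) :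
    ∀ a : A, π • a = 0 → a = 0 := by
  intro a ha
  have hq2 : 2 ≤ q := hq ▸ two_le_card_quotient_span_singleton hπ
  have hπK : algebraMap D K π ≠ 0 :=
    (map_ne_zero_iff _ (IsFractionRing.injective D K)).mpr hπ.ne_zero
  have hF0 : op ⟨F, hFInt⟩ 0 = 0 := by
    have hcomp0 : F.comp ((0 : D[X]).map (algebraMap D K)) = (0 : D[X]).map (algebraMap D K) := by
      rw [Polynomial.map_zero, comp_zero,
        eval_zero_eq_zero_of_C_mul_eq_X_pow_sub_X hF hπK (by omega), C_0]
    simpa using op_aeval_of_comp_eq_map D K op heval hcomp ⟨F, hFInt⟩ hcomp0 a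
  have hFπ : op ⟨F, hFInt⟩ (π • a) = π ^ (q - 1) • a ^ q - a := by
    have hcompπ : F.comp ((C π * X).map (algebraMap D K)) =
        (C (π ^ (q - 1)) * X ^ q - X).map (algebraMap D K) := by
      simpa using comp_C_mul_X_eq_of_C_mul_eq_X_pow_sub_X hF hπK (by omega)
    simpa [Algebra.smul_def] using
      op_aeval_of_comp_eq_map D K op heval hcomp ⟨F, hFInt⟩ hcompπ a
  have hvanish : π ^ (q - 1) • a ^ q = 0 := by
    rw [← Nat.sub_one_add_one (by omega : q ≠ 0), pow_succ, Nat.add_sub_cancel, ← smul_mul_assoc,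
      ← _root_.smul_pow, ha, zero_pow (by omega), zero_mul]
  rw [ha, hF0, hvanish, zero_sub] at hFπ
  exact neg_eq_zero.mp hFπ.symm
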